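/- Grid structure preservation and recovery theorem: Let S and S' be open connected subsets of ℝ^d and h : S → S' a smooth diffeomorphism. Let A be a discrete coordination on S whose axis-separator set 𝒢(A) has a backbone, and let B be a discrete coordination on S'. Suppose h(grid_S(A)) = grid_{S'}(B). Then there exist a permutation σ of {1,…,d} and a sign vector s ∈ {−1,+1}^d such that for every j ∈ {1,…,d}, setting i = σ⁻¹(j), one has K := n_i = m_j (the numbers of thresholds agree), and for every k ∈ {1,…,K} and every z' ∈ S': if s_i = +1 then (z'_j = B_{j,k} ⇔ (h⁻¹ z')_i = A_{i,k}), (z'_j > B_{j,k} ⇔ (h⁻¹ z')_i > A_{i,k}), and (z'_j < B_{j,k} ⇔ (h⁻¹ z')_i < A_{i,k}); if s_i = −1 then (z'_j = B_{j,k} ⇔ (h⁻¹ z')_i = A_{i,K−k+1}), (z'_j > B_{j,k} ⇔ (h⁻¹ z')_i < A_{i,K−k+1}), and (z'_j < B_{j,k} ⇔ (h⁻¹ z')_i > A_{i,K−k+1}). -/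

import Mathlib

open Set MeasureTheory Topology

noncomputable section

abbrev Euc (d : ℕ) := EuclideanSpace ℝ (Fin d)

/-- Axis separator: points of `S` whose `i`-th coordinate equals `τ`. -/
def Gamma {d : ℕ} (S : Set (Euc d)) (i : Fin d) (τ : ℝ) : Set (Euc d) :=
  {z | z ∈ S ∧ z i = τ}

/-- Positive half: points of `S` whose `i`-th coordinate is greater than `τ`. -/
def GammaPos {d : ℕ} (S : Set (Euc d)) (i : Fin d) (τ : ℝ) : Set (Euc d) :=
  {z | z ∈ S ∧ τ < z i}

/-- Negative half: points of `S` whose `i`-th coordinate is less than `τ`. -/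
def GammaNeg {d : ℕ} (S : Set (Euc d)) (i : Fin d) (τ : ℝ) : Set (Euc d) :=
  {z | z ∈ S ∧ z i < τ}

/-- `Γ_S(i,τ)` is an axis-separator of `S`: it is nonempty and connected, and both of
its halves are nonempty and connected. (`IsConnected` includes nonemptiness.) -/
def IsAxisSeparator {d : ℕ} (S : Set (Euc d)) (i : Fin d) (τ : ℝ) : Prop :=
  IsConnected (Gamma S i τ) ∧ IsConnected (GammaPos S i τ) ∧ IsConnected (GammaNeg S i τ)

/-- A smooth diffeomorphism from `S` onto `S'` with explicit inverse `hinv`. -/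
structure IsSmoothDiffeoOn {d : ℕ} (h hinv : Euc d → Euc d) (S S' : Set (Euc d)) : Prop where
  mapsTo : Set.MapsTo h S S'
  mapsTo_inv : Set.MapsTo hinv S' S
  left_inv : ∀ z ∈ S, hinv (h z) = z
  right_inv : ∀ z' ∈ S', h (hinv z') = z'
  smooth : ContDiffOn ℝ (⊤ : ℕ∞) h S
  smooth_inv : ContDiffOn ℝ (⊤ : ℕ∞) hinv S'

/-- A discrete coordination on `S`: for each axis `i`, a strictly increasing nonempty tuple
of thresholds, each giving an axis-separator of `S`. -/
structure DiscreteCoordination {d : ℕ} (S : Set (Euc d)) where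
  n : Fin d → ℕ
  n_pos : ∀ i, 0 < n i
  A : (i : Fin d) → Fin (n i) → ℝ
  mono : ∀ i, StrictMono (A i)
  sep : ∀ i k, IsAxisSeparator S i (A i k)

/-- The grid of a discrete coordination: the union of all its axis-separators. -/
def DiscreteCoordination.grid {d : ℕ} {S : Set (Euc d)} (C : DiscreteCoordination S) :
    Set (Euc d) :=
  ⋃ (i : Fin d), ⋃ (k : Fin (C.n i)), Gamma S i (C.A i k)

/-- The parallel-separator-set along axis `i`. -/
def DiscreteCoordination.axisSet {d : ℕ} {S : Set (Euc d)} (C : DiscreteCoordination S)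
    (i : Fin d) : Set (Set (Euc d)) :=
  {H | ∃ k : Fin (C.n i), H = Gamma S i (C.A i k)}

/-- The axis-separator set of a discrete coordination. -/
def DiscreteCoordination.sepSet {d : ℕ} {S : Set (Euc d)} (C : DiscreteCoordination S) :
    Set (Set (Euc d)) :=
  {H | ∃ (i : Fin d) (k : Fin (C.n i)), H = Gamma S i (C.A i k)}

/-- A backbone: a choice of one separator per axis such that they all meet in a single
point and each of them meets every separator of the grid lying on a different axis. -/
def DiscreteCoordination.HasBackbone {d : ℕ} {S : Set (Euc d)}
    (C : DiscreteCoordination S) : Prop :=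
  ∃ kstar : (i : Fin d) → Fin (C.n i),
    (∃ z : Euc d, (⋂ (i : Fin d), Gamma S i (C.A i (kstar i))) = {z}) ∧
    ∀ (i j : Fin d), j ≠ i → ∀ k : Fin (C.n j),
      (Gamma S i (C.A i (kstar i)) ∩ Gamma S j (C.A j k)).Nonempty

/-- Quantization: `Q(x;T) = Σ_k 1[x ≥ T_k]`. -/
def Q {K : ℕ} (x : ℝ) (T : Fin K → ℝ) : ℕ :=
  (Finset.univ.filter fun k : Fin K => T k ≤ x).card

/-- Quantization with order reversal: `Q⁻(x;T) = Σ_k 1[x ≤ T_k]`. -/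
def Qneg {K : ℕ} (x : ℝ) (T : Fin K → ℝ) : ℕ :=
  (Finset.univ.filter fun k : Fin K => x ≤ T k).card

/-- Signed quantization: `Q^{+1} = Q` and `Q^{-1} = Q⁻`. -/
def Qsgn {K : ℕ} (s : ℤ) (x : ℝ) (T : Fin K → ℝ) : ℕ :=
  if s = 1 then Q x T else Qneg x T

/-- `μ` (absolutely continuous w.r.t. Lebesgue) has a non-removable discontinuity at `z`
if every measurable density of `μ` w.r.t. Lebesgue measure is discontinuous at `z`. -/
def HasNonRemovableDiscont {d : ℕ} (μ : Measure (Euc d)) (z : Euc d) : Prop :=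
  ∀ q : Euc d → ENNReal, Measurable q → μ = volume.withDensity q → ¬ ContinuousAt q z

/-- `T` has exactly two connected components, namely `Cp` and `Cm`. -/
def TwoComponents {d : ℕ} (T Cp Cm : Set (Euc d)) : Prop :=
  Cp ≠ Cm ∧
  (∃ x ∈ T, connectedComponentIn T x = Cp) ∧
  (∃ x ∈ T, connectedComponentIn T x = Cm) ∧
  ∀ x ∈ T, connectedComponentIn T x = Cp ∨ connectedComponentIn T x = Cm

/-- The intersection set of a finite family of separators: points lying on at least two
distinct members. -/
def interSet {d M : ℕ} (H : Fin M → Set (Euc d)) : Set (Euc d) :=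
  ⋃ (m : Fin M), ⋃ (m' : Fin M), ⋃ (_ : m ≠ m'), H m ∩ H m'

/-!
Since `grid_{S'}(B) = h(grid_S(A))`, the map `h⁻¹` sends each separator `Γ` of `B` into the
finite union of the hyperplanes carrying the separators of `A`. As `h⁻¹` is a diffeomorphism,
at each point of `Γ` at most one coordinate of `h⁻¹` can be stationary along `Γ`, whereas on a
relatively open piece of `Γ` mapped into a single hyperplane that coordinate is stationary. By
Baire's theorem such pieces are dense in `Γ`, and the connectedness of `Γ` then puts all of
`h⁻¹(Γ)` into one hyperplane. Hence `h` induces a bijection between the separators of `A` and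
those of `B`.

The separators of a backbone meet each other and every separator on another axis, while
meeting separators can never be sent to parallel ones; this forces the bijection to respect the
axes through a permutation `σ`. Finally, `h` sends the two connected halves of each separator to
the two halves of its image, keeping or swapping them, and comparing the position of one
separator relative to another shows that the choice is the same along a whole axis, so the
thresholds correspond in increasing or in decreasing order.
-/

theorem cmp_eq_cmp_of_imp {α β : Type*} [LinearOrder α] [LinearOrder β] {x a : α} {y b : β}
    (hlt : x < a → y < b) (heq : x = a → y = b) (hgt : a < x → b < y) :
    cmp x a = cmp y b := by
  rcases lt_trichotomy x a with hxa | hxa | hxa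
  · rw [(cmp_eq_lt_iff _ _).mpr hxa, (cmp_eq_lt_iff _ _).mpr (hlt hxa)]
  · rw [(cmp_eq_eq_iff _ _).mpr hxa, (cmp_eq_eq_iff _ _).mpr (heq hxa)]
  · rw [(cmp_eq_gt_iff _ _).mpr hxa, (cmp_eq_gt_iff _ _).mpr (hgt hxa)]

theorem eq_of_cmp_eq_cmp_flip {α : Type*} [LinearOrder α] {x y : α} (h : cmp x y = cmp y x) :
    x = y := by
  rcases lt_trichotomy x y with hxy | hxy | hxy
  · rw [(cmp_eq_lt_iff _ _).mpr hxy, ← cmp_swap, (cmp_eq_lt_iff _ _).mpr hxy] at h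
    cases h
  · exact hxy
  · rw [(cmp_eq_gt_iff _ _).mpr hxy, ← cmp_swap, (cmp_eq_gt_iff _ _).mpr hxy] at h
    cases h

theorem Fin.exists_cast_eq_of_strictMono_surjective {n m : ℕ} {f : Fin n → Fin m}
    (hf : StrictMono f) (hs : Function.Surjective f) :
    ∃ hK : n = m, ∀ k, f k = Fin.cast hK k := by
  have hK : n = m := by simpa using Fintype.card_of_bijective ⟨hf.injective, hs⟩
  exact ⟨hK, DFunLike.congr_fun
    (Subsingleton.elim (hf.orderIsoOfSurjective f hs) (Fin.castOrderIso hK))⟩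

theorem IsPreconnected.forall_lt_or_forall_gt_of_ne {X α : Type*} [TopologicalSpace X]
    [LinearOrder α] [TopologicalSpace α] [OrderClosedTopology α] {s : Set X}
    (hs : IsPreconnected s) {f : X → α} (hf : ContinuousOn f s) {c : α}
    (hc : ∀ x ∈ s, f x ≠ c) : (∀ x ∈ s, f x < c) ∨ (∀ x ∈ s, c < f x) := by
  by_contra! ⟨⟨x, hx, hxc⟩, ⟨y, hy, hyc⟩⟩
  obtain ⟨z, hz, hzc⟩ := hs.intermediate_value hy hx hf ⟨hyc, hxc⟩
  exact hc z hz hzc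

theorem iff_of_cmp_eq_cmp {α β : Type*} [LinearOrder α] [LinearOrder β] {x a : α} {y b : β}
    (h : cmp x a = cmp y b) : (y = b ↔ x = a) ∧ (y > b ↔ x > a) ∧ (y < b ↔ x < a) := by
  refine ⟨?_, ?_, ?_⟩
  · rw [← cmp_eq_eq_iff, ← cmp_eq_eq_iff x, h]
  · rw [gt_iff_lt, gt_iff_lt, ← cmp_eq_gt_iff, ← cmp_eq_gt_iff x, h]
  · rw [← cmp_eq_lt_iff, ← cmp_eq_lt_iff x, h]

theorem iff_of_cmp_eq_cmp_swap {α β : Type*} [LinearOrder α] [LinearOrder β] {x a : α}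
    {y b : β}
    (h : cmp x a = cmp b y) : (y = b ↔ x = a) ∧ (y > b ↔ x < a) ∧ (y < b ↔ x > a) := by
  refine ⟨?_, ?_, ?_⟩
  · rw [← cmp_eq_eq_iff x, h, cmp_eq_eq_iff, eq_comm]
  · rw [← cmp_eq_lt_iff x, h, cmp_eq_lt_iff, gt_iff_lt]
  · rw [gt_iff_lt, ← cmp_eq_gt_iff x, h, cmp_eq_gt_iff]

open Function in
theorem PreconnectedSpace.exists_eq_univ_of_interior_subset {X ι : Type*} [TopologicalSpace X]
    [BaireSpace X] [PreconnectedSpace X] [Nonempty X] [Finite ι] {C E : ι → Set X}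
    (hC : ∀ p, IsClosed (C p)) (hcov : ⋃ p, C p = univ) (hE : ∀ p, IsClosed (E p))
    (hdisj : Pairwise (Disjoint on E)) (hCE : ∀ p, interior (C p) ⊆ E p) :
    ∃ p, E p = univ := by
  have hEcov : ⋃ p, E p = univ := by
    refine eq_univ_of_univ_subset ?_
    rw [← (dense_iUnion_interior_of_closed hC hcov).closure_eq]
    exact closure_minimal (iUnion_mono hCE) (isClosed_iUnion_of_finite hE)
  have hcompl : ∀ p, (E p)ᶜ = ⋃ q, ⋃ (_ : q ≠ p), E q := by
    intro p
    ext x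
    obtain ⟨q, hq⟩ := mem_iUnion.mp (hEcov ▸ mem_univ x)
    simp only [mem_compl_iff, mem_iUnion, exists_prop]
    refine ⟨fun hx => ⟨q, fun hqp => hx (hqp ▸ hq), hq⟩, ?_⟩
    rintro ⟨r, hrp, hr⟩ hx
    exact (hdisj hrp).notMem_of_mem_left hr hx
  have hclopen : ∀ p, IsClopen (E p) := by
    refine fun p => ⟨hE p, ?_⟩
    rw [← isClosed_compl_iff, hcompl]
    exact isClosed_iUnion_of_finite fun q => isClosed_iUnion_of_finite fun _ => hE q
  obtain ⟨x⟩ := ‹Nonempty X›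
  obtain ⟨p, hp⟩ := mem_iUnion.mp (hEcov ▸ mem_univ x)
  exact ⟨p, (isClopen_iff.mp (hclopen p)).resolve_left (nonempty_of_mem hp).ne_empty⟩

theorem eq_of_coord_vanish_on_hyperplane {d : ℕ} {D : Euc d →L[ℝ] Euc d}
    (hD : Function.Surjective D) {j i i' : Fin d}
    (hi : ∀ v : Euc d, v j = 0 → D v i = 0) (hi' : ∀ v : Euc d, v j = 0 → D v i' = 0) :
    i = i' := by
  set e : Euc d := EuclideanSpace.single j 1
  -- both coordinates of `D` are multiples of `v ↦ v j`, which surjectivity forbids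
  have hfactor : ∀ i₀, (∀ v : Euc d, v j = 0 → D v i₀ = 0) →
      ∀ v, D v i₀ = v j * D e i₀ := by
    intro i₀ hi₀ v
    have hv : D (v - v j • e) i₀ = 0 := hi₀ _ (by simp [e])
    simpa [map_sub, map_smul, sub_eq_zero] using hv
  by_contra hne
  obtain ⟨v, hv⟩ := hD (EuclideanSpace.single i 1)
  obtain ⟨u, hu⟩ := hD (EuclideanSpace.single i' 1)
  have h1 := hfactor i hi v
  have h2 := hfactor i' hi' v
  have h3 := hfactor i' hi' u
  simp only [hv, hu, PiLp.single_apply, if_true, Ne.symm hne, if_false] at h1 h2 h3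
  rcases mul_eq_zero.mp h2.symm with h | h
  · simp [h] at h1
  · simp [h] at h3

theorem fderiv_apply_coord_eq_zero_of_eqOn_hyperplane {d : ℕ} {g : Euc d → Euc d} {w : Euc d}
    (hg : DifferentiableAt ℝ g w) {U : Set (Euc d)} (hU : U ∈ 𝓝 w) {i j : Fin d} {τ a : ℝ}
    (hw : w j = τ) (hconst : ∀ u ∈ U, u j = τ → g u i = a) {v : Euc d} (hv : v j = 0) :
    fderiv ℝ g w v i = 0 := by
  have hderiv : HasDerivAt (fun t : ℝ => g (w + t • v) i) (fderiv ℝ g w v i) 0 :=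
    ((EuclideanSpace.proj (𝕜 := ℝ) i).hasFDerivAt.comp w hg.hasFDerivAt).hasLineDerivAt v
  have hline : Filter.Tendsto (fun t : ℝ => w + t • v) (𝓝 0) (𝓝 w) :=
    (by fun_prop : Continuous fun t : ℝ => w + t • v).tendsto' 0 w (by simp)
  have hconst' : (fun t : ℝ => g (w + t • v) i) =ᶠ[𝓝 0] fun _ => a := by
    filter_upwards [hline.eventually_mem hU] with t ht
    exact hconst _ ht (by simp [hv, hw])
  exact hderiv.unique ((hasDerivAt_const 0 a).congr_of_eventuallyEq hconst')

theorem fderiv_apply_coord_eq_zero_of_mem_interior {d : ℕ} {S : Set (Euc d)} (hS : IsOpen S)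
    {g : Euc d → Euc d} (hg : ContDiffOn ℝ 1 g S) {i j : Fin d} {τ a : ℝ} {w : Gamma S j τ}
    (hw : w ∈ interior {u : Gamma S j τ | g u i = a}) {v : Euc d} (hv : v j = 0) :
    fderiv ℝ g w v i = 0 := by
  set C := {u : Gamma S j τ | g u i = a}
  obtain ⟨U, hUo, hU⟩ := isOpen_induced_iff.mp (isOpen_interior (s := C))
  have hwS : (w : Euc d) ∈ S := w.2.1
  have hwU : (w : Euc d) ∈ U := show w ∈ Subtype.val ⁻¹' U from hU ▸ hw
  refine fderiv_apply_coord_eq_zero_of_eqOn_hyperplane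
    ((hg.contDiffAt (hS.mem_nhds hwS)).differentiableAt one_ne_zero)
    (a := a) (Filter.inter_mem (hUo.mem_nhds hwU) (hS.mem_nhds hwS)) w.2.2 (fun u hu huj => ?_) hv
  have hmem : (⟨u, hu.2, huj⟩ : Gamma S j τ) ∈ interior C := hU ▸ hu.1
  exact (interior_subset hmem : (⟨u, hu.2, huj⟩ : Gamma S j τ) ∈ C)

theorem IsSmoothDiffeoOn.symm {d : ℕ} {h hinv : Euc d → Euc d} {S S' : Set (Euc d)}
    (hd : IsSmoothDiffeoOn h hinv S S') : IsSmoothDiffeoOn hinv h S' S :=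
  ⟨hd.mapsTo_inv, hd.mapsTo, hd.right_inv, hd.left_inv, hd.smooth_inv, hd.smooth⟩

theorem IsSmoothDiffeoOn.surjective_fderiv {d : ℕ} {h hinv : Euc d → Euc d}
    {S S' : Set (Euc d)} (hS : IsOpen S) (hS' : IsOpen S') (hd : IsSmoothDiffeoOn h hinv S S')
    {z : Euc d} (hz : z ∈ S) : Function.Surjective (fderiv ℝ h z) := by
  have hw : h z ∈ S' := hd.mapsTo hz
  have hdh : HasFDerivAt h (fderiv ℝ h z) (hinv (h z)) := by
    rw [hd.left_inv z hz]
    exact ((hd.smooth.contDiffAt (hS.mem_nhds hz)).differentiableAt (by simp)).hasFDerivAt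
  have hdinv : HasFDerivAt hinv (fderiv ℝ hinv (h z)) (h z) :=
    ((hd.smooth_inv.contDiffAt (hS'.mem_nhds hw)).differentiableAt (by simp)).hasFDerivAt
  have hid : (h ∘ hinv) =ᶠ[𝓝 (h z)] id :=
    Filter.eventually_of_mem (hS'.mem_nhds hw) hd.right_inv
  have hcomp := (hdh.comp (h z) hdinv).unique ((hasFDerivAt_id (h z)).congr_of_eventuallyEq hid)
  exact fun y => ⟨fderiv ℝ hinv (h z) y, by simpa using congrArg (· y) hcomp⟩

theorem exists_forall_apply_eq_of_forall_exists_apply_eq {d : ℕ} {S : Set (Euc d)}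
    (hS : IsOpen S) {g : Euc d → Euc d} (hg : ContDiffOn ℝ 1 g S)
    (hsurj : ∀ w ∈ S, Function.Surjective (fderiv ℝ g w)) {j : Fin d} {τ : ℝ}
    (hΓ : IsConnected (Gamma S j τ)) {P : Set (Fin d × ℝ)} (hP : P.Finite)
    (hcov : ∀ w ∈ Gamma S j τ, ∃ p ∈ P, g w p.1 = p.2) :
    ∃ p ∈ P, ∀ w ∈ Gamma S j τ, g w p.1 = p.2 := by
  set Γ := Gamma S j τ
  have hΓS : Γ ⊆ S := fun w hw => hw.1
  have : Finite P := hP.to_subtype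
  have : PreconnectedSpace Γ := Subtype.preconnectedSpace hΓ.isPreconnected
  have : Nonempty Γ := hΓ.nonempty.to_subtype
  have : LocallyCompactSpace Γ := (hS.isLocallyClosed.inter
    (isClosed_eq (by fun_prop) continuous_const).isLocallyClosed).locallyCompactSpace
  have hcont : ∀ i, Continuous fun w : Γ => g w i := fun i =>
    (EuclideanSpace.proj (𝕜 := ℝ) i).continuous.comp (hg.continuousOn.mono hΓS).domRestrict
  have hcont' : ∀ v i, Continuous fun w : Γ => fderiv ℝ g w v i := fun v i =>
    (EuclideanSpace.proj (𝕜 := ℝ) i).continuous.comp <|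
      (((hg.continuousOn_fderiv_of_isOpen hS le_rfl).mono hΓS).clm_apply
        continuousOn_const).domRestrict
  let C : P → Set Γ := fun p => {w | g w p.1.1 = p.1.2}
  let E : P → Set Γ := fun p =>
    C p ∩ {w | ∀ v : Euc d, v j = 0 → fderiv ℝ g w v p.1.1 = 0}
  have hC : ∀ p, IsClosed (C p) := fun p => isClosed_eq (hcont _) continuous_const
  have hE : ∀ p, IsClosed (E p) := by
    refine fun p => (hC p).inter ?_
    simp only [ofPred_forall]
    exact isClosed_iInter fun v => isClosed_iInter fun _ =>
      isClosed_eq (hcont' v p.1.1) continuous_const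
  have hdisj : Pairwise (Function.onFun Disjoint E) := by
    refine fun p q hpq => disjoint_left.mpr fun w hwp hwq => hpq ?_
    have haxis : p.1.1 = q.1.1 := eq_of_coord_vanish_on_hyperplane (hsurj w (hΓS w.2)) hwp.2 hwq.2
    exact Subtype.ext (Prod.ext haxis (hwp.1.symm.trans (haxis ▸ hwq.1)))
  have hCE : ∀ p, interior (C p) ⊆ E p := fun p w hw =>
    ⟨interior_subset hw, fun _ hv => fderiv_apply_coord_eq_zero_of_mem_interior hS hg hw hv⟩
  obtain ⟨p, hp⟩ := PreconnectedSpace.exists_eq_univ_of_interior_subset hC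
    (eq_univ_of_forall fun w => mem_iUnion.mpr (by
      obtain ⟨p, hp, hw⟩ := hcov w w.2
      exact ⟨⟨p, hp⟩, hw⟩)) hE hdisj hCE
  exact ⟨p.1, p.2, fun w hw => (hp ▸ mem_univ (⟨w, hw⟩ : Γ) : _ ∈ E p).1⟩

section Separators

variable {d : ℕ} {S S' : Set (Euc d)} {h hinv : Euc d → Euc d}

theorem eq_of_Gamma_subset_Gamma (hS : IsOpen S) {p q : Fin d × ℝ}
    (hne : (Gamma S p.1 p.2).Nonempty) (hsub : Gamma S p.1 p.2 ⊆ Gamma S q.1 q.2) : p = q := by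
  obtain ⟨z, hzS, hzp⟩ := hne
  have hzq := (hsub ⟨hzS, hzp⟩).2
  suffices haxis : p.1 = q.1 from Prod.ext haxis (hzp.symm.trans (haxis ▸ hzq))
  by_contra hne
  set e : Euc d := EuclideanSpace.single q.1 1
  have hline : Filter.Tendsto (fun t : ℝ => z + t • e) (𝓝[≠] 0) (𝓝 z) :=
    ((by fun_prop : Continuous fun t : ℝ => z + t • e).tendsto' 0 z (by simp)).mono_left
      nhdsWithin_le_nhds
  obtain ⟨t, htS, ht⟩ :=
    ((hline.eventually_mem (hS.mem_nhds hzS)).and self_mem_nhdsWithin).exists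
  have hmem := (hsub ⟨htS, by simp [e, hne, hzp]⟩).2
  simp [e, hzq] at hmem
  exact ht hmem

/-- `h` carries `Γ_S(p.1, p.2)` onto `Γ_{h(S)}(q.1, q.2)`: separators are encoded by their
axis–level pairs. -/
def MapsSeparator (S : Set (Euc d)) (h : Euc d → Euc d) (p q : Fin d × ℝ) : Prop :=
  ∀ z ∈ S, z p.1 = p.2 ↔ h z q.1 = q.2

theorem MapsSeparator.inv (hd : IsSmoothDiffeoOn h hinv S S') {p q : Fin d × ℝ}
    (hpq : MapsSeparator S h p q) : MapsSeparator S' hinv q p := fun w hw => by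
  simpa only [hd.right_inv w hw] using (hpq (hinv w) (hd.mapsTo_inv hw)).symm

theorem MapsSeparator.eq_of_meet (hS : IsOpen S) {p p' q q' : Fin d × ℝ}
    (hpq : MapsSeparator S h p q) (hpq' : MapsSeparator S h p' q') (haxis : q.1 = q'.1)
    {z : Euc d} (hz : z ∈ S) (hzp : z p.1 = p.2) (hzp' : z p'.1 = p'.2) : p = p' := by
  have hq : q = q' :=
    Prod.ext haxis (((hpq z hz).mp hzp).symm.trans (haxis ▸ (hpq' z hz).mp hzp'))
  subst hq
  exact eq_of_Gamma_subset_Gamma hS ⟨z, hz, hzp⟩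
    fun w hw => ⟨hw.1, (hpq' w hw.1).mpr ((hpq w hw.1).mp hw.2)⟩

theorem MapsSeparator.right_unique (hS' : IsOpen S') (hd : IsSmoothDiffeoOn h hinv S S')
    {p q q' : Fin d × ℝ} (hpq : MapsSeparator S h p q) (hpq' : MapsSeparator S h p q')
    (hne : (Gamma S p.1 p.2).Nonempty) : q = q' := by
  obtain ⟨z, hz, hzp⟩ := hne
  refine (hpq.inv hd).eq_of_meet hS' (hpq'.inv hd) rfl (hd.mapsTo hz) ?_ ?_
  exacts [(hpq z hz).mp hzp, (hpq' z hz).mp hzp]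

def DiscreteCoordination.levels (C : DiscreteCoordination S) : Set (Fin d × ℝ) :=
  range fun p : Σ i, Fin (C.n i) => (p.1, C.A p.1 p.2)

theorem DiscreteCoordination.mem_levels (C : DiscreteCoordination S) (i : Fin d)
    (k : Fin (C.n i)) : (i, C.A i k) ∈ C.levels :=
  ⟨⟨i, k⟩, rfl⟩

theorem DiscreteCoordination.mem_grid {C : DiscreteCoordination S} {z : Euc d} :
    z ∈ C.grid ↔ z ∈ S ∧ ∃ p ∈ C.levels, z p.1 = p.2 := by
  simp [DiscreteCoordination.grid, DiscreteCoordination.levels, Gamma, eq_comm]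

theorem DiscreteCoordination.grid_subset (C : DiscreteCoordination S) : C.grid ⊆ S :=
  fun _ hz => (DiscreteCoordination.mem_grid.mp hz).1

theorem DiscreteCoordination.isConnected_Gamma (C : DiscreteCoordination S)
    {p : Fin d × ℝ} (hp : p ∈ C.levels) : IsConnected (Gamma S p.1 p.2) := by
  obtain ⟨⟨i, k⟩, rfl⟩ := hp
  exact (C.sep i k).1

theorem IsSmoothDiffeoOn.image_inv_eq (hd : IsSmoothDiffeoOn h hinv S S') {T T' : Set (Euc d)}
    (hT : T ⊆ S) (hTT' : h '' T = T') : hinv '' T' = T :=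
  hTT' ▸ LeftInvOn.image_image fun z hz => hd.left_inv z (hT hz)

theorem exists_forall_mem_Gamma_apply_eq (hS : IsOpen S) (hS' : IsOpen S')
    (hd : IsSmoothDiffeoOn h hinv S S') {CA : DiscreteCoordination S}
    {CB : DiscreteCoordination S'} (hgrid : h '' CA.grid = CB.grid) {p : Fin d × ℝ}
    (hp : p ∈ CA.levels) : ∃ q ∈ CB.levels, ∀ z ∈ Gamma S p.1 p.2, h z q.1 = q.2 :=
  exists_forall_apply_eq_of_forall_exists_apply_eq hS (hd.smooth.of_le (by exact_mod_cast le_top))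
    (fun _ hz => hd.surjective_fderiv hS hS' hz) (CA.isConnected_Gamma hp) (finite_range _)
    fun z hz => (DiscreteCoordination.mem_grid.mp (hgrid ▸ mem_image_of_mem h
      (DiscreteCoordination.mem_grid.mpr ⟨hz.1, p, hp, hz.2⟩))).2

theorem exists_mapsSeparator (hS : IsOpen S) (hS' : IsOpen S') (hd : IsSmoothDiffeoOn h hinv S S')
    {CA : DiscreteCoordination S} {CB : DiscreteCoordination S'} (hgrid : h '' CA.grid = CB.grid)
    {p : Fin d × ℝ} (hp : p ∈ CA.levels) : ∃ q ∈ CB.levels, MapsSeparator S h p q := by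
  obtain ⟨q, hq, hpq⟩ := exists_forall_mem_Gamma_apply_eq hS hS' hd hgrid hp
  obtain ⟨p', -, hqp'⟩ := exists_forall_mem_Gamma_apply_eq hS' hS hd.symm
    (hd.image_inv_eq CA.grid_subset hgrid) hq
  have hback : ∀ z ∈ S, h z q.1 = q.2 → z p'.1 = p'.2 := fun z hz hzq =>
    hd.left_inv z hz ▸ hqp' (h z) ⟨hd.mapsTo hz, hzq⟩
  obtain rfl : p = p' := eq_of_Gamma_subset_Gamma hS (CA.isConnected_Gamma hp).nonempty
    fun z hz => ⟨hz.1, hback z hz.1 (hpq z hz)⟩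
  exact ⟨q, hq, fun z hz => ⟨fun hzp => hpq z ⟨hz, hzp⟩, hback z hz⟩⟩

end Separators

theorem DiscreteCoordination.HasBackbone.exists_perm_fst_eq {d : ℕ} {S : Set (Euc d)}
    {h : Euc d → Euc d} (hS : IsOpen S) {C : DiscreteCoordination S} (hbb : C.HasBackbone)
    {F : (i : Fin d) → Fin (C.n i) → Fin d × ℝ}
    (hF : ∀ i k, MapsSeparator S h (i, C.A i k) (F i k)) :
    ∃ σ : Equiv.Perm (Fin d), ∀ i k, (F i k).1 = σ i := by
  obtain ⟨kstar, -, hmeet⟩ := hbb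
  have hsep : ∀ i i' k, i' ≠ i → (F i' k).1 ≠ (F i (kstar i)).1 := fun i i' k hne heq => by
    obtain ⟨z, hz, hz'⟩ := hmeet i i' hne k
    exact hne (congrArg Prod.fst ((hF i' k).eq_of_meet hS (hF i (kstar i)) heq hz'.1 hz'.2 hz.2))
  have hinj : Function.Injective fun i => (F i (kstar i)).1 := fun i i' heq =>
    by_contra fun hne => hsep i i' (kstar i') (Ne.symm hne) heq.symm
  let σ := Equiv.ofBijective _ (Finite.injective_iff_bijective.mp hinj)
  refine ⟨σ, fun i k => by_contra fun hne => ?_⟩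
  obtain ⟨i', hi'⟩ := σ.surjective (F i k).1
  exact hsep i' i k (fun hii' => hne (hii' ▸ hi'.symm)) hi'.symm

theorem exists_perm_mapsSeparator {d : ℕ} {S S' : Set (Euc d)} {h hinv : Euc d → Euc d}
    (hS : IsOpen S) (hS' : IsOpen S') (hd : IsSmoothDiffeoOn h hinv S S')
    {CA : DiscreteCoordination S} (hbb : CA.HasBackbone) {CB : DiscreteCoordination S'}
    (hgrid : h '' CA.grid = CB.grid) :
    ∃ σ : Equiv.Perm (Fin d), ∀ i j, σ i = j →
      (∀ k, ∃ l, MapsSeparator S h (i, CA.A i k) (j, CB.A j l)) ∧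
      (∀ l, ∃ k, MapsSeparator S h (i, CA.A i k) (j, CB.A j l)) := by
  choose F hF hFA using fun i k => exists_mapsSeparator hS hS' hd hgrid (CA.mem_levels i k)
  obtain ⟨σ, hσ⟩ := hbb.exists_perm_fst_eq hS hFA
  refine ⟨σ, fun i j hij => ⟨fun k => ?_, fun l => ?_⟩⟩
  · obtain ⟨⟨j', l⟩, hl⟩ := hF i k
    obtain rfl : j' = j := (congrArg Prod.fst hl).trans ((hσ i k).trans hij)
    exact ⟨l, (show F i k = (j', CB.A j' l) from hl.symm) ▸ hFA i k⟩
  · obtain ⟨p, ⟨⟨i', k⟩, rfl⟩, hp⟩ := exists_mapsSeparator hS' hS hd.symm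
      (hd.image_inv_eq CA.grid_subset hgrid) (CB.mem_levels j l)
    have hFk := (hFA i' k).right_unique hS' hd (hp.inv hd.symm) (CA.sep i' k).1.nonempty
    obtain rfl : i' = i :=
      σ.injective ((hσ i' k).symm.trans ((congrArg Prod.fst hFk).trans hij.symm))
    exact ⟨k, hp.inv hd.symm⟩

section Sides

variable {d : ℕ} {S S' : Set (Euc d)} {h hinv : Euc d → Euc d}

/-- `cmp (z i) τ` records at once whether `z` lies below, on or above `Γ_S(i, τ)`. -/
def PreservesSides (S : Set (Euc d)) (h : Euc d → Euc d) (p q : Fin d × ℝ) : Prop :=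
  ∀ z ∈ S, cmp (z p.1) p.2 = cmp (h z q.1) q.2

def SwapsSides (S : Set (Euc d)) (h : Euc d → Euc d) (p q : Fin d × ℝ) : Prop :=
  ∀ z ∈ S, cmp (z p.1) p.2 = cmp q.2 (h z q.1)

theorem MapsSeparator.preservesSides_or_swapsSides (hd : IsSmoothDiffeoOn h hinv S S')
    {p q : Fin d × ℝ} (hpq : MapsSeparator S h p q)
    (hpos : IsPreconnected (GammaPos S p.1 p.2)) (hneg : IsPreconnected (GammaNeg S p.1 p.2))
    (hpos' : (GammaPos S' q.1 q.2).Nonempty) (hneg' : (GammaNeg S' q.1 q.2).Nonempty) :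
    PreservesSides S h p q ∨ SwapsSides S h p q := by
  have hcont : ContinuousOn (fun z => h z q.1) S :=
    (EuclideanSpace.proj (𝕜 := ℝ) q.1).continuous.comp_continuousOn hd.smooth.continuousOn
  have hne : ∀ z ∈ S, z p.1 ≠ p.2 → h z q.1 ≠ q.2 := fun z hz => mt (hpq z hz).mpr
  have hhit : ∀ w ∈ S', ∃ z ∈ S, h z q.1 = w q.1 := fun w hw =>
    ⟨hinv w, hd.mapsTo_inv hw, by rw [hd.right_inv w hw]⟩
  rcases hpos.forall_lt_or_forall_gt_of_ne (hcont.mono fun z hz => hz.1)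
      (fun z hz => hne z hz.1 hz.2.ne') with hP | hP <;>
    rcases hneg.forall_lt_or_forall_gt_of_ne (hcont.mono fun z hz => hz.1)
      (fun z hz => hne z hz.1 hz.2.ne) with hN | hN
  · obtain ⟨w, hwS', hw⟩ := hpos'
    obtain ⟨z, hz, hzw⟩ := hhit w hwS'
    refine absurd (hzw ▸ hw) (not_lt.mpr ?_)
    rcases lt_trichotomy (z p.1) p.2 with hlt | heq | hgt
    exacts [(hN z ⟨hz, hlt⟩).le, ((hpq z hz).mp heq).le, (hP z ⟨hz, hgt⟩).le]
  · exact .inr fun z hz => cmp_eq_cmp_of_imp (fun hlt => hN z ⟨hz, hlt⟩)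
      (fun heq => ((hpq z hz).mp heq).symm) (fun hgt => hP z ⟨hz, hgt⟩)
  · exact .inl fun z hz => cmp_eq_cmp_of_imp (fun hlt => hN z ⟨hz, hlt⟩)
      (fun heq => (hpq z hz).mp heq) (fun hgt => hP z ⟨hz, hgt⟩)
  · obtain ⟨w, hwS', hw⟩ := hneg'
    obtain ⟨z, hz, hzw⟩ := hhit w hwS'
    refine absurd (hzw ▸ hw) (not_lt.mpr ?_)
    rcases lt_trichotomy (z p.1) p.2 with hlt | heq | hgt
    exacts [(hN z ⟨hz, hlt⟩).le, ((hpq z hz).mp heq).ge, (hP z ⟨hz, hgt⟩).le]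

theorem PreservesSides.cmp_eq {i j : Fin d} {a b a' b' : ℝ}
    (hP : PreservesSides S h (i, a) (j, b))
    (hpq : MapsSeparator S h (i, a') (j, b')) (hne : (Gamma S i a').Nonempty) :
    cmp a' a = cmp b' b := by
  obtain ⟨z, hz, hza⟩ := hne
  simpa only [hza, (hpq z hz).mp hza] using hP z hz

theorem SwapsSides.cmp_eq {i j : Fin d} {a b a' b' : ℝ} (hP : SwapsSides S h (i, a) (j, b))
    (hpq : MapsSeparator S h (i, a') (j, b')) (hne : (Gamma S i a').Nonempty) :
    cmp a' a = cmp b b' := by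
  obtain ⟨z, hz, hza⟩ := hne
  simpa only [hza, (hpq z hz).mp hza] using hP z hz

theorem PreservesSides.cmp_inv {p q : Fin d × ℝ} (hP : PreservesSides S h p q)
    (hd : IsSmoothDiffeoOn h hinv S S') {z' : Euc d} (hz' : z' ∈ S') :
    cmp (hinv z' p.1) p.2 = cmp (z' q.1) q.2 := by
  simpa only [hd.right_inv z' hz'] using hP (hinv z') (hd.mapsTo_inv hz')

theorem SwapsSides.cmp_inv {p q : Fin d × ℝ} (hP : SwapsSides S h p q)
    (hd : IsSmoothDiffeoOn h hinv S S') {z' : Euc d} (hz' : z' ∈ S') :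
    cmp (hinv z' p.1) p.2 = cmp q.2 (z' q.1) := by
  simpa only [hd.right_inv z' hz'] using hP (hinv z') (hd.mapsTo_inv hz')

theorem forall_preservesSides_or_forall_swapsSides {ι : Type*} {i j : Fin d} {a b : ι → ℝ}
    (ha : Function.Injective a) (hab : ∀ k, MapsSeparator S h (i, a k) (j, b k))
    (hne : ∀ k, (Gamma S i (a k)).Nonempty)
    (horient : ∀ k, PreservesSides S h (i, a k) (j, b k) ∨ SwapsSides S h (i, a k) (j, b k)) :
    (∀ k, PreservesSides S h (i, a k) (j, b k)) ∨ (∀ k, SwapsSides S h (i, a k) (j, b k)) := by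
  refine or_iff_not_imp_left.mpr fun hall => ?_
  obtain ⟨k₀, hk₀⟩ := not_forall.mp hall
  have hsw₀ := (horient k₀).resolve_left hk₀
  refine fun k => (horient k).resolve_left fun hk => hk₀ ?_
  have hcmp := hk.cmp_eq (hab k₀) (hne k₀)
  rw [← hsw₀.cmp_eq (hab k) (hne k)] at hcmp
  rwa [ha (eq_of_cmp_eq_cmp_flip hcmp)]

end Sides

theorem exists_cast_preservesSides_or_swapsSides {d : ℕ} {S S' : Set (Euc d)}
    {h hinv : Euc d → Euc d} (hd : IsSmoothDiffeoOn h hinv S S') {i j : Fin d} {n m : ℕ}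
    {A : Fin n → ℝ} {B : Fin m → ℝ} (hA : StrictMono A) (hB : StrictMono B)
    (hsepA : ∀ k, IsAxisSeparator S i (A k)) (hsepB : ∀ l, IsAxisSeparator S' j (B l))
    (hAB : ∀ k, ∃ l, MapsSeparator S h (i, A k) (j, B l))
    (hBA : ∀ l, ∃ k, MapsSeparator S h (i, A k) (j, B l)) :
    ∃ hK : n = m, (∀ k, PreservesSides S h (i, A k) (j, B (Fin.cast hK k))) ∨
      (∀ k, SwapsSides S h (i, A k.rev) (j, B (Fin.cast hK k))) := by
  choose f hf using hAB
  have hne : ∀ k, (Gamma S i (A k)).Nonempty := fun k => (hsepA k).1.nonempty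
  have hsurj : Function.Surjective f := fun l => by
    obtain ⟨k, hk⟩ := hBA l
    obtain ⟨z, hz, hzk⟩ := hne k
    exact ⟨k, hB.injective (((hf k) z hz).mp hzk |>.symm.trans ((hk z hz).mp hzk))⟩
  have horient (k) : PreservesSides S h (i, A k) (j, B (f k)) ∨
      SwapsSides S h (i, A k) (j, B (f k)) :=
    (hf k).preservesSides_or_swapsSides hd (hsepA k).2.1.isPreconnected
      (hsepA k).2.2.isPreconnected (hsepB (f k)).2.1.nonempty (hsepB (f k)).2.2.nonempty
  have hcoherent := forall_preservesSides_or_forall_swapsSides (b := fun k => B (f k))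
    hA.injective hf hne horient
  rcases hcoherent with hP | hSw
  · have hmono : StrictMono f := fun k k' hkk' => by
      have hcmp := (hP k).cmp_eq (hf k') (hne k')
      rwa [hA.cmp_map_eq, hB.cmp_map_eq, (cmp_eq_gt_iff _ _).mpr hkk', eq_comm,
        cmp_eq_gt_iff] at hcmp
    obtain ⟨hK, hfK⟩ := Fin.exists_cast_eq_of_strictMono_surjective hmono hsurj
    exact ⟨hK, .inl fun k => hfK k ▸ hP k⟩
  · have hmono : StrictMono fun k => (f k).rev := fun k k' hkk' => by
      have hcmp := (hSw k).cmp_eq (hf k') (hne k')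
      rw [hA.cmp_map_eq, hB.cmp_map_eq, (cmp_eq_gt_iff _ _).mpr hkk', eq_comm,
        cmp_eq_gt_iff] at hcmp
      exact Fin.rev_lt_rev.mpr hcmp
    obtain ⟨hK, hfK⟩ := Fin.exists_cast_eq_of_strictMono_surjective hmono
      (Fin.revPerm.surjective.comp hsurj)
    refine ⟨hK, .inr fun k => ?_⟩
    have hfk : f k.rev = Fin.cast hK k := by
      rw [← Fin.rev_rev (f k.rev), hfK, Fin.cast_rev, Fin.rev_rev]
    exact hfk ▸ hSw k.rev

theorem exists_sign_of_preservesSides_or_swapsSides {d : ℕ} {S S' : Set (Euc d)}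
    {h hinv : Euc d → Euc d} (hd : IsSmoothDiffeoOn h hinv S S') {i j : Fin d} {n m : ℕ}
    {A : Fin n → ℝ} {B : Fin m → ℝ} (hK : n = m)
    (hsides : (∀ k, PreservesSides S h (i, A k) (j, B (Fin.cast hK k))) ∨
      (∀ k, SwapsSides S h (i, A k.rev) (j, B (Fin.cast hK k)))) :
    ∃ s : ℤ, (s = 1 ∨ s = -1) ∧ ∀ k : Fin n, ∀ z' ∈ S',
      (s = 1 →
        ((z' j = B (Fin.cast hK k) ↔ hinv z' i = A k) ∧
         (z' j > B (Fin.cast hK k) ↔ hinv z' i > A k) ∧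
         (z' j < B (Fin.cast hK k) ↔ hinv z' i < A k))) ∧
      (s = -1 →
        ((z' j = B (Fin.cast hK k) ↔ hinv z' i = A k.rev) ∧
         (z' j > B (Fin.cast hK k) ↔ hinv z' i < A k.rev) ∧
         (z' j < B (Fin.cast hK k) ↔ hinv z' i > A k.rev))) := by
  rcases hsides with hP | hSw
  · exact ⟨1, .inl rfl, fun k z' hz' =>
      ⟨fun _ => iff_of_cmp_eq_cmp ((hP k).cmp_inv hd hz'), fun h1 => absurd h1 (by norm_num)⟩⟩
  · exact ⟨-1, .inr rfl, fun k z' hz' =>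
      ⟨fun h1 => absurd h1 (by norm_num),
        fun _ => iff_of_cmp_eq_cmp_swap ((hSw k).cmp_inv hd hz')⟩⟩

theorem grid_structure_preservation_and_recovery_general
    {d : ℕ} {S S' : Set (Euc d)} (hS : IsOpen S)
    (hS' : IsOpen S')
    {h hinv : Euc d → Euc d} (hdiff : IsSmoothDiffeoOn h hinv S S')
    (CA : DiscreteCoordination S) (hbb : CA.HasBackbone)
    (CB : DiscreteCoordination S')
    (hgrid : h '' CA.grid = CB.grid) :
    ∃ (σ : Equiv.Perm (Fin d)) (s : Fin d → ℤ),
      (∀ i, s i = 1 ∨ s i = -1) ∧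
      ∀ j : Fin d, ∃ hK : CA.n (σ.symm j) = CB.n j,
        ∀ k : Fin (CA.n (σ.symm j)), ∀ z' ∈ S',
          (s (σ.symm j) = 1 →
            ((z' j = CB.A j (Fin.cast hK k) ↔ hinv z' (σ.symm j) = CA.A (σ.symm j) k) ∧
             (z' j > CB.A j (Fin.cast hK k) ↔ hinv z' (σ.symm j) > CA.A (σ.symm j) k) ∧
             (z' j < CB.A j (Fin.cast hK k) ↔ hinv z' (σ.symm j) < CA.A (σ.symm j) k))) ∧
          (s (σ.symm j) = -1 →
            ((z' j = CB.A j (Fin.cast hK k) ↔ hinv z' (σ.symm j) = CA.A (σ.symm j) k.rev) ∧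
             (z' j > CB.A j (Fin.cast hK k) ↔ hinv z' (σ.symm j) < CA.A (σ.symm j) k.rev) ∧
             (z' j < CB.A j (Fin.cast hK k) ↔ hinv z' (σ.symm j) > CA.A (σ.symm j) k.rev))) := by
  obtain ⟨σ, hσ⟩ := exists_perm_mapsSeparator hS hS' hdiff hbb hgrid
  choose hK hsides using fun j => exists_cast_preservesSides_or_swapsSides hdiff
    (CA.mono (σ.symm j)) (CB.mono j) (CA.sep _) (CB.sep j)
    (hσ _ j (σ.apply_symm_apply j)).1 (hσ _ j (σ.apply_symm_apply j)).2
  choose s hs hsign using fun j =>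
    exists_sign_of_preservesSides_or_swapsSides hdiff (hK j) (hsides j)
  exact ⟨σ, fun i => s (σ i), fun i => hs (σ i),
    fun j => ⟨hK j, by simpa only [Equiv.apply_symm_apply] using hsign j⟩⟩

/-- **Grid structure preservation and recovery theorem.** -/
theorem grid_structure_preservation_and_recovery
    {d : ℕ} {S S' : Set (Euc d)} (hS : IsOpen S) (hSc : IsConnected S)
    (hS' : IsOpen S') (hS'c : IsConnected S')
    {h hinv : Euc d → Euc d} (hdiff : IsSmoothDiffeoOn h hinv S S')
    (CA : DiscreteCoordination S) (hbb : CA.HasBackbone)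
    (CB : DiscreteCoordination S')
    (hgrid : h '' CA.grid = CB.grid) :
    ∃ (σ : Equiv.Perm (Fin d)) (s : Fin d → ℤ),
      (∀ i, s i = 1 ∨ s i = -1) ∧
      ∀ j : Fin d, ∃ hK : CA.n (σ.symm j) = CB.n j,
        ∀ k : Fin (CA.n (σ.symm j)), ∀ z' ∈ S',
          (s (σ.symm j) = 1 →
            ((z' j = CB.A j (Fin.cast hK k) ↔ hinv z' (σ.symm j) = CA.A (σ.symm j) k) ∧
             (z' j > CB.A j (Fin.cast hK k) ↔ hinv z' (σ.symm j) > CA.A (σ.symm j) k) ∧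
             (z' j < CB.A j (Fin.cast hK k) ↔ hinv z' (σ.symm j) < CA.A (σ.symm j) k))) ∧
          (s (σ.symm j) = -1 →
            ((z' j = CB.A j (Fin.cast hK k) ↔ hinv z' (σ.symm j) = CA.A (σ.symm j) k.rev) ∧
             (z' j > CB.A j (Fin.cast hK k) ↔ hinv z' (σ.symm j) < CA.A (σ.symm j) k.rev) ∧
             (z' j < CB.A j (Fin.cast hK k) ↔ hinv z' (σ.symm j) > CA.A (σ.symm j) k.rev))) :=
  grid_structure_preservation_and_recovery_general hS hS' hdiff CA hbb CB hgrid
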